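/- arXiv:2104.12824 — 5 statements merged into one kernel-verified Lean document; each statement's English description precedes it below -/
import Mathlib

section
/- There exists a constant C > 0, depending only on ω, ρ, M and ‖g‖_{L^∞(0,∞)}, such that for every integer k ≥ 1 the following holds: if Φ ∈ H²(0,∞) satisfies Φ'' = −k²ω² g Φ almost everywhere on (0,∞) and |Φ(x)| ≤ M e^{−ρx} for all x ≥ 0, then ‖Φ‖_{L²(0,∞)} ≤ C, ‖Φ'‖_{L²(0,∞)} ≤ C·k, and ‖Φ'‖_{L^∞(0,∞)} ≤ C·k^{3/2}; in particular |Φ'(0)| ≤ C·k^{3/2}. -/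
/-!
By the mean value theorem on `[x, x + h]`, the decay `|Φ| ≤ M e^{-ρx}` gives a point `c` with
`|Φ' c| ≤ 2 M e^{-ρx} / h`, while the equation bounds the oscillation of `Φ'` on that interval by
`h k² ω² G M e^{-ρx}`. The choice `h = 1/k` balances the two terms:
`|Φ' x| ≤ M (2 + ω² G) k e^{-ρx}`. This gives the sup bound (as `k ≤ k^{3/2}`), and squaring and
integrating the exponential bounds on `Φ` and `Φ'` gives the `L²` bounds.
-/

open MeasureTheory Set Real

lemma abs_deriv_le_of_abs_le_of_abs_sub_le {f f' : ℝ → ℝ} {x h B D : ℝ} (hh : 0 < h)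
    (hf : ContinuousOn f (Icc x (x + h))) (hf' : ∀ t ∈ Ioo x (x + h), HasDerivAt f (f' t) t)
    (hB : ∀ t ∈ Icc x (x + h), |f t| ≤ B) (hD : ∀ t ∈ Ioo x (x + h), |f' t - f' x| ≤ D) :
    |f' x| ≤ 2 * B / h + D := by
  obtain ⟨c, hc, hslope⟩ := exists_hasDerivAt_eq_slope f f' (by linarith) hf hf'
  have hfc : |f' c| ≤ 2 * B / h := by
    rw [hslope, add_sub_cancel_left, abs_div, abs_of_pos hh]
    gcongr
    calc |f (x + h) - f x| ≤ |f (x + h)| + |f x| := abs_sub _ _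
      _ ≤ B + B :=
        add_le_add (hB _ (right_mem_Icc.2 (by linarith))) (hB _ (left_mem_Icc.2 (by linarith)))
      _ = 2 * B := by ring
  linarith [abs_sub_abs_le_abs_sub (f' x) (f' c), abs_sub_comm (f' x) (f' c), hD c hc]

lemma abs_integral_neg_mul_le {g Φ : ℝ → ℝ} {a G B x t : ℝ} (hG : 0 ≤ G) (hx : 0 ≤ x)
    (hxt : x ≤ t) (hg : ∀ᵐ s ∂(volume.restrict (Ioi 0)), |g s| ≤ G)
    (hΦ : ∀ s ∈ Ioc x t, |Φ s| ≤ B) :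
    |∫ s in x..t, -(a * g s * Φ s)| ≤ |a| * G * B * (t - x) := by
  have hbd : ∀ᵐ s, s ∈ uIoc x t → ‖-(a * g s * Φ s)‖ ≤ |a| * G * B := by
    filter_upwards [(ae_restrict_iff' measurableSet_Ioi).mp hg] with s hgs hs
    rw [uIoc_of_le hxt] at hs
    rw [norm_neg, norm_eq_abs, abs_mul, abs_mul]
    gcongr
    · exact hgs (hx.trans_lt hs.1)
    · exact hΦ s hs
  simpa [abs_of_nonneg (sub_nonneg.2 hxt)] using
    intervalIntegral.norm_integral_le_of_norm_le_const_ae hbd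

lemma abs_deriv_le_of_decay {Φ Φ' g : ℝ → ℝ} {a G M ρ x h : ℝ} (hG : 0 ≤ G) (hM : 0 ≤ M)
    (hρ : 0 ≤ ρ) (hx : 0 ≤ x) (hh : 0 < h) (hg : ∀ᵐ s ∂(volume.restrict (Ioi 0)), |g s| ≤ G)
    (hd : ∀ s ∈ Ici (0 : ℝ), HasDerivWithinAt Φ (Φ' s) (Ici 0) s)
    (heq : ∀ x₁ ∈ Ici (0 : ℝ), ∀ x₂ ∈ Ici (0 : ℝ),
      Φ' x₂ - Φ' x₁ = ∫ s in x₁..x₂, -(a * g s * Φ s))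
    (hdec : ∀ s, 0 ≤ s → |Φ s| ≤ M * exp (-ρ * s)) :
    |Φ' x| ≤ (2 / h + |a| * G * h) * (M * exp (-ρ * x)) := by
  have hB : ∀ s ∈ Ici x, |Φ s| ≤ M * exp (-ρ * x) := fun s hs =>
    (hdec s (hx.trans hs)).trans
      (mul_le_mul_of_nonneg_left (exp_le_exp.2 (by nlinarith [mem_Ici.1 hs])) hM)
  set B := M * exp (-ρ * x)
  have hcont : ContinuousOn Φ (Icc x (x + h)) := fun s hs =>
    (hd s (hx.trans hs.1)).continuousWithinAt.mono fun u hu => hx.trans hu.1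
  have hderiv : ∀ s ∈ Ioo x (x + h), HasDerivAt Φ (Φ' s) s := fun s hs =>
    (hd s (hx.trans hs.1.le)).hasDerivAt (Ici_mem_nhds (hx.trans_lt hs.1))
  have hosc : ∀ s ∈ Ioo x (x + h), |Φ' s - Φ' x| ≤ |a| * G * B * h := by
    intro s hs
    rw [heq x hx s (hx.trans hs.1.le)]
    refine (abs_integral_neg_mul_le hG hx hs.1.le hg fun u hu => hB u hu.1.le).trans ?_
    gcongr
    linarith [hs.2]
  calc |Φ' x| ≤ 2 * B / h + |a| * G * B * h :=
        abs_deriv_le_of_abs_le_of_abs_sub_le hh hcont hderiv (fun s hs => hB s hs.1) hosc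
    _ = (2 / h + |a| * G * h) * B := by ring

lemma integral_sq_le_of_abs_le_mul_exp {F : ℝ → ℝ} {B ρ : ℝ} (hρ : 0 < ρ)
    (hF : MemLp F 2 (volume.restrict (Ioi 0))) (hdec : ∀ x, 0 ≤ x → |F x| ≤ B * exp (-ρ * x)) :
    ∫ x in Ioi 0, F x ^ 2 ≤ B ^ 2 / (2 * ρ) := by
  have hexp : ∫ x in Ioi (0 : ℝ), exp (-(2 * ρ) * x) = 1 / (2 * ρ) := by
    rw [integral_exp_mul_Ioi (by linarith)]
    field_simp
    simp
  calc ∫ x in Ioi 0, F x ^ 2 ≤ ∫ x in Ioi 0, B ^ 2 * exp (-(2 * ρ) * x) := by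
        refine setIntegral_mono_on hF.integrable_sq
          ((exp_neg_integrableOn_Ioi 0 (by linarith)).const_mul _) measurableSet_Ioi fun x hx => ?_
        calc F x ^ 2 = |F x| ^ 2 := (sq_abs _).symm
          _ ≤ (B * exp (-ρ * x)) ^ 2 := by gcongr; exact hdec x (le_of_lt hx)
          _ = B ^ 2 * exp (-(2 * ρ) * x) := by rw [mul_pow, ← exp_nat_mul]; ring_nf
    _ = B ^ 2 / (2 * ρ) := by rw [integral_const_mul, hexp]; ring

theorem stmt2_general (ω ρ M G : ℝ) (hρ : 0 < ρ) (hM : 0 < M) (hG : 0 ≤ G) :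
    ∃ C : ℝ, 0 < C ∧
      ∀ g : ℝ → ℝ,
        (∀ᵐ x ∂(volume.restrict (Set.Ioi (0 : ℝ))), |g x| ≤ G) →
        ∀ k : ℕ, 1 ≤ k →
          ∀ Φ Φ' : ℝ → ℝ,
            -- Φ is C¹ on [0,∞) with derivative Φ'
            (∀ x ∈ Set.Ici (0 : ℝ), HasDerivWithinAt Φ (Φ' x) (Set.Ici 0) x) →
            (ContinuousOn Φ' (Set.Ici 0)) →
            -- Φ' is absolutely continuous with (weak) derivative Φ'' = -k²ω² g Φ
            (∀ x₁ ∈ Set.Ici (0 : ℝ), ∀ x₂ ∈ Set.Ici (0 : ℝ),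
              Φ' x₂ - Φ' x₁ = ∫ x in x₁..x₂, -((k : ℝ) ^ 2 * ω ^ 2 * g x * Φ x)) →
            -- Φ, Φ' ∈ L²(0,∞)  (membership in H²(0,∞))
            MemLp Φ 2 (volume.restrict (Set.Ioi (0 : ℝ))) →
            MemLp Φ' 2 (volume.restrict (Set.Ioi (0 : ℝ))) →
            -- exponential decay
            (∀ x : ℝ, 0 ≤ x → |Φ x| ≤ M * Real.exp (-ρ * x)) →
            ((∫ x in Set.Ioi (0 : ℝ), (Φ x) ^ 2) ≤ C ^ 2 ∧
              (∫ x in Set.Ioi (0 : ℝ), (Φ' x) ^ 2) ≤ C ^ 2 * (k : ℝ) ^ 2 ∧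
              (∀ x : ℝ, 0 ≤ x → |Φ' x| ≤ C * (k : ℝ) ^ ((3 : ℝ) / 2)) ∧
              |Φ' 0| ≤ C * (k : ℝ) ^ ((3 : ℝ) / 2)) := by
  set A := M * (2 + ω ^ 2 * G) with hA
  set C := A * (1 + (√(2 * ρ))⁻¹)
  have hMA : M ≤ A := by nlinarith [mul_nonneg (sq_nonneg ω) hG]
  have hAC : A ≤ C :=
    le_mul_of_one_le_right (by positivity) (le_add_of_nonneg_right (by positivity))
  have hAC' : A / √(2 * ρ) ≤ C := by
    rw [div_eq_mul_inv]
    exact mul_le_mul_of_nonneg_left (by simp) (by positivity)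
  refine ⟨C, by positivity, fun g hg k hk Φ Φ' hd _ heq hΦ hΦ' hdec => ?_⟩
  have hk1 : (1 : ℝ) ≤ k := by exact_mod_cast hk
  have hΦ'dec : ∀ x, 0 ≤ x → |Φ' x| ≤ A * k * exp (-ρ * x) := fun x hx =>
    calc |Φ' x| ≤ (2 / (k : ℝ)⁻¹ + |(k : ℝ) ^ 2 * ω ^ 2| * G * (k : ℝ)⁻¹) * (M * exp (-ρ * x)) :=
          abs_deriv_le_of_decay hG hM.le hρ.le hx (by positivity) hg hd heq hdec
      _ = A * k * exp (-ρ * x) := by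
          rw [abs_of_nonneg (by positivity), hA]
          field_simp
  have hsup : ∀ x, 0 ≤ x → |Φ' x| ≤ C * (k : ℝ) ^ ((3 : ℝ) / 2) := fun x hx =>
    calc |Φ' x| ≤ A * k * exp (-ρ * x) := hΦ'dec x hx
      _ ≤ A * k := mul_le_of_le_one_right (by positivity) (exp_le_one_iff.2 (by nlinarith))
      _ ≤ C * (k : ℝ) ^ ((3 : ℝ) / 2) := by
        gcongr
        exact self_le_rpow_of_one_le hk1 (by norm_num)
  have hsq : ∀ B : ℝ, B ^ 2 / (2 * ρ) = (B / √(2 * ρ)) ^ 2 := fun B => by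
    rw [div_pow, sq_sqrt (by positivity)]
  refine ⟨?_, ?_, hsup, hsup 0 le_rfl⟩
  · calc _ ≤ (M / √(2 * ρ)) ^ 2 := hsq M ▸ integral_sq_le_of_abs_le_mul_exp hρ hΦ hdec
      _ ≤ C ^ 2 := by gcongr; exact (div_le_div_of_nonneg_right hMA (by positivity)).trans hAC'
  · calc _ ≤ (A * k / √(2 * ρ)) ^ 2 := hsq _ ▸ integral_sq_le_of_abs_le_mul_exp hρ hΦ' hΦ'dec
      _ = (A / √(2 * ρ)) ^ 2 * (k : ℝ) ^ 2 := by ring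
      _ ≤ C ^ 2 * (k : ℝ) ^ 2 := by gcongr

/-- Norm estimates for the decaying fundamental solutions: there is a constant `C > 0`
depending only on `ω, ρ, M` and the `L^∞(0,∞)`-bound `G` of `g`, such that for every
`k ≥ 1` and every `Φ ∈ H²(0,∞)` (with `C¹` representative `Φ` and derivative `Φ'`)
solving `Φ'' = -k²ω² g Φ` a.e. on `(0,∞)` and satisfying `|Φ(x)| ≤ M e^{-ρx}`:
`‖Φ‖_{L²(0,∞)} ≤ C`, `‖Φ'‖_{L²(0,∞)} ≤ C k`, `‖Φ'‖_{L^∞(0,∞)} ≤ C k^{3/2}`,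
and in particular `|Φ'(0)| ≤ C k^{3/2}`. -/
theorem stmt2 (ω ρ M G : ℝ) (hω : 0 < ω) (hρ : 0 < ρ) (hM : 0 < M) (hG : 0 ≤ G) :
    ∃ C : ℝ, 0 < C ∧
      ∀ g : ℝ → ℝ,
        (∀ᵐ x ∂(volume.restrict (Set.Ioi (0 : ℝ))), |g x| ≤ G) →
        ∀ k : ℕ, 1 ≤ k →
          ∀ Φ Φ' : ℝ → ℝ,
            -- Φ is C¹ on [0,∞) with derivative Φ'
            (∀ x ∈ Set.Ici (0 : ℝ), HasDerivWithinAt Φ (Φ' x) (Set.Ici 0) x) →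
            (ContinuousOn Φ' (Set.Ici 0)) →
            -- Φ' is absolutely continuous with (weak) derivative Φ'' = -k²ω² g Φ
            (∀ x₁ ∈ Set.Ici (0 : ℝ), ∀ x₂ ∈ Set.Ici (0 : ℝ),
              Φ' x₂ - Φ' x₁ = ∫ x in x₁..x₂, -((k : ℝ) ^ 2 * ω ^ 2 * g x * Φ x)) →
            -- Φ, Φ' ∈ L²(0,∞)  (membership in H²(0,∞))
            MemLp Φ 2 (volume.restrict (Set.Ioi (0 : ℝ))) →
            MemLp Φ' 2 (volume.restrict (Set.Ioi (0 : ℝ))) →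
            -- exponential decay
            (∀ x : ℝ, 0 ≤ x → |Φ x| ≤ M * Real.exp (-ρ * x)) →
            ((∫ x in Set.Ioi (0 : ℝ), (Φ x) ^ 2) ≤ C ^ 2 ∧
              (∫ x in Set.Ioi (0 : ℝ), (Φ' x) ^ 2) ≤ C ^ 2 * (k : ℝ) ^ 2 ∧
              (∀ x : ℝ, 0 ≤ x → |Φ' x| ≤ C * (k : ℝ) ^ ((3 : ℝ) / 2)) ∧
              |Φ' 0| ≤ C * (k : ℝ) ^ ((3 : ℝ) / 2)) :=
  stmt2_general ω ρ M G hρ hM hG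
end

section
/- If a_{k₀} < 0 for some k₀ ∈ ℤodd, then inf_{z∈D} J(z) < 0; consequently every minimizer of J on D is a nontrivial (nonzero) sequence. -/
/-- Convolution of two real sequences indexed by `ℤ`:
`(x * y)_k = ∑_{l ∈ ℤ} x_l y_{k-l}` (interpreted via `tsum`). -/
noncomputable def conv (x y : ℤ → ℝ) : ℤ → ℝ := fun k => ∑' l : ℤ, x l * y (k - l)

/-- The space `D` of real sequences: vanishing at even indices, odd in `k`, and
`z * z ∈ ℓ²(ℤ)`. -/
def MemD (z : ℤ → ℝ) : Prop :=
  (∀ k : ℤ, Even k → z k = 0) ∧ (∀ k : ℤ, z (-k) = - z k) ∧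
  Summable (fun k : ℤ => (conv z z k) ^ 2)

/-- The norm on `D`: `‖z‖ = ‖z*z‖_{ℓ²}^{1/2} = (∑_k ((z*z)_k)²)^{1/4}`. -/
noncomputable def Dnorm (z : ℤ → ℝ) : ℝ := (∑' k : ℤ, (conv z z k) ^ 2) ^ ((1 : ℝ) / 4)

/-- The functional `J(z) = ¼ (z*z*z*z)_0 + ∑_{k ∈ ℤodd} a_k z_k²`; since `z_k = 0` for
even `k`, the sum over all of `ℤ` agrees with the sum over the odd integers. -/
noncomputable def Jfun (a : ℤ → ℝ) (z : ℤ → ℝ) : ℝ :=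
  (1 / 4) * conv (conv z z) (conv z z) 0 + ∑' k : ℤ, a k * (z k) ^ 2

/-- The triple convolution `(z*z*z)_k = ∑_{l} (z*z)_l z_{k-l}`. -/
noncomputable def conv3 (z : ℤ → ℝ) : ℤ → ℝ := fun k => ∑' l : ℤ, conv z z l * z (k - l)

/-
Test on the odd sequence `z = t (δ_{k₀} - δ_{-k₀})`: then `z * z = t² (δ_{2k₀} - 2 δ₀ + δ_{-2k₀})`,
so `J(z) = (3/2) t⁴ + 2 a_{k₀} t²`, which is negative for `t² = -a_{k₀}`. Since `J(0) = 0`,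
a minimizer cannot be `0`.
-/

lemma conv_eq_finset_sum {x : ℤ → ℝ} {s : Finset ℤ} (hx : ∀ l ∉ s, x l = 0) (y : ℤ → ℝ)
    (k : ℤ) : conv x y k = ∑ l ∈ s, x l * y (k - l) :=
  tsum_eq_sum fun l hl => by rw [hx l hl, zero_mul]

lemma conv_zero_left (y : ℤ → ℝ) : conv 0 y = 0 := by
  funext k; simp [conv]

lemma Jfun_zero (a : ℤ → ℝ) : Jfun a 0 = 0 := by
  simp [Jfun, conv_zero_left]

def dipole (k₀ : ℤ) (t : ℝ) : ℤ → ℝ :=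
  fun k => if k = k₀ then t else if k = -k₀ then -t else 0

section Dipole

variable {k₀ : ℤ} (t : ℝ)

lemma dipole_eq_zero {k : ℤ} (h₁ : k ≠ k₀) (h₂ : k ≠ -k₀) : dipole k₀ t k = 0 := by
  simp [dipole, h₁, h₂]

lemma dipole_apply_neg (hk₀ : k₀ ≠ 0) : dipole k₀ t (-k₀) = -t := by
  simp [dipole, show -k₀ ≠ k₀ by omega]

lemma conv_dipole_self (hk₀ : k₀ ≠ 0) (k : ℤ) :
    conv (dipole k₀ t) (dipole k₀ t) k =
      if k = 2 * k₀ then t ^ 2 else if k = 0 then -2 * t ^ 2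
      else if k = -(2 * k₀) then t ^ 2 else 0 := by
  rw [conv_eq_finset_sum (s := {k₀, -k₀}) (by simp +contextual [dipole_eq_zero]),
    Finset.sum_pair (by omega)]
  simp only [dipole]
  split_ifs <;> first | omega | ring

lemma memD_dipole (hk₀ : Odd k₀) : MemD (dipole k₀ t) := by
  have hne : k₀ ≠ 0 := by rintro rfl; simp at hk₀
  refine ⟨fun k hk => dipole_eq_zero t ?_ ?_, fun k => ?_, ?_⟩
  · rintro rfl; exact Int.not_even_iff_odd.mpr hk₀ hk
  · rintro rfl; exact Int.not_even_iff_odd.mpr hk₀.neg hk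
  · simp only [dipole]
    split_ifs <;> first | omega | simp
  · refine summable_of_ne_finset_zero (s := {2 * k₀, 0, -(2 * k₀)}) fun k hk => ?_
    simp only [Finset.mem_insert, Finset.mem_singleton, not_or] at hk
    rw [conv_dipole_self t hne, if_neg hk.1, if_neg hk.2.1, if_neg hk.2.2, sq, mul_zero]

lemma conv_conv_dipole_zero (hk₀ : k₀ ≠ 0) :
    conv (conv (dipole k₀ t) (dipole k₀ t)) (conv (dipole k₀ t) (dipole k₀ t)) 0 = 6 * t ^ 4 := by
  rw [conv_eq_finset_sum (s := {2 * k₀, 0, -(2 * k₀)})]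
  · rw [Finset.sum_insert (by simp; omega), Finset.sum_pair (by omega)]
    have h₁ : (0 : ℤ) ≠ 2 * k₀ := by omega
    have h₂ : -(2 * k₀) ≠ 2 * k₀ := by omega
    have h₃ : -(2 * k₀) ≠ 0 := by omega
    simp only [conv_dipole_self t hk₀, zero_sub, neg_zero, neg_neg, if_true, if_neg h₁,
      if_neg h₂, if_neg h₃]
    ring
  · intro l hl
    simp only [Finset.mem_insert, Finset.mem_singleton, not_or] at hl
    rw [conv_dipole_self t hk₀, if_neg hl.1, if_neg hl.2.1, if_neg hl.2.2]

lemma tsum_mul_dipole_sq (a : ℤ → ℝ) (hk₀ : k₀ ≠ 0) :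
    ∑' k, a k * dipole k₀ t k ^ 2 = (a k₀ + a (-k₀)) * t ^ 2 := by
  rw [tsum_eq_sum (s := {k₀, -k₀}) (by simp +contextual [dipole_eq_zero]),
    Finset.sum_pair (by omega), dipole_apply_neg t hk₀]
  simp only [dipole, ↓reduceIte, even_two, Even.neg_pow]
  ring

lemma Jfun_dipole (a : ℤ → ℝ) (hk₀ : k₀ ≠ 0) :
    Jfun a (dipole k₀ t) = 3 / 2 * t ^ 4 + (a k₀ + a (-k₀)) * t ^ 2 := by
  rw [Jfun, conv_conv_dipole_zero t hk₀, tsum_mul_dipole_sq t a hk₀]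
  ring

end Dipole

lemma exists_memD_Jfun_neg (a : ℤ → ℝ) (hsym : ∀ k : ℤ, a (-k) = a k) {k₀ : ℤ}
    (hk₀ : Odd k₀) (hneg : a k₀ < 0) : ∃ z, MemD z ∧ Jfun a z < 0 := by
  have hne : k₀ ≠ 0 := by rintro rfl; simp at hk₀
  set t := Real.sqrt (-a k₀)
  have ht : t ^ 2 = -a k₀ := Real.sq_sqrt (by linarith)
  refine ⟨dipole k₀ t, memD_dipole t hk₀, ?_⟩
  rw [Jfun_dipole t a hne, hsym, show t ^ 4 = (t ^ 2) ^ 2 by ring, ht]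
  nlinarith

theorem stmt4_general (a : ℤ → ℝ) (hsym : ∀ k : ℤ, a (-k) = a k)
    (k₀ : ℤ) (hk₀ : Odd k₀) (hneg : a k₀ < 0) :
    (∃ z : ℤ → ℝ, MemD z ∧ Jfun a z < 0) ∧
    (∀ α : ℤ → ℝ, MemD α → (∀ z : ℤ → ℝ, MemD z → Jfun a α ≤ Jfun a z) → α ≠ 0) := by
  obtain ⟨z, hz, hJz⟩ := exists_memD_Jfun_neg a hsym hk₀ hneg
  refine ⟨⟨z, hz, hJz⟩, fun α _ hmin hα => ?_⟩
  have := hmin z hz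
  rw [hα, Jfun_zero] at this
  linarith

/-- If `a_{k₀} < 0` for some odd `k₀`, then `inf_{z ∈ D} J(z) < 0`; consequently every
minimizer of `J` on `D` is nontrivial. -/
theorem stmt4 (a : ℤ → ℝ) (hsym : ∀ k : ℤ, a (-k) = a k)
    (hbd : ∃ B : ℝ, ∀ k : ℤ, Odd k → |a k| ≤ B)
    (k₀ : ℤ) (hk₀ : Odd k₀) (hneg : a k₀ < 0) :
    (∃ z : ℤ → ℝ, MemD z ∧ Jfun a z < 0) ∧
    (∀ α : ℤ → ℝ, MemD α → (∀ z : ℤ → ℝ, MemD z → Jfun a α ≤ Jfun a z) → α ≠ 0) :=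
  stmt4_general a hsym k₀ hk₀ hneg
end

section
/- Let b(x) := (1+x²)^{−1/2}, g(x) := −b''(x)/b(x), and h(x) := −b''(x)/b(x)³; explicitly h(x) = (1−2x²)/(1+x²). Let a : ℝ → ℝ be twice differentiable and satisfy −a''(t) − 3a'(t)² a''(t) = a(t) for all t ∈ ℝ. Then the function w(x,t) := a(t) b(x) satisfies the quasilinear wave equation g(x) ∂_t² w − ∂_x² w + h(x) ∂_t((∂_t w)³) = 0 pointwise for all (x,t) ∈ ℝ², where ∂_t((∂_t w)³) = 3 (∂_t w)² ∂_t² w. -/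
/-!
Writing `s = √(1 + x²)`, so that `b = 1/s`, one computes `b' = -x/s³` and `b'' = (2x² - 1)/s⁵`;
hence `h = -b''/b³ = (1 - 2x²)/s²`. For `w = a b` the choice `g = -b''/b`, `h = -b''/b³` makes every
term of the wave equation a multiple of `b''`, and it reduces to `b'' (-a'' - 3a'²a'' - a) = 0`,
which is the ODE for `a`.
-/

open Real

lemma hasDerivAt_sqrt_one_add_sq (x : ℝ) :
    HasDerivAt (fun x => √(1 + x ^ 2)) (x / √(1 + x ^ 2)) x := by
  have hsq : HasDerivAt (fun x : ℝ => 1 + x ^ 2) (2 * x) x := by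
    simpa using (hasDerivAt_pow 2 x).const_add 1
  refine ((hasDerivAt_sqrt (by positivity)).comp x hsq).congr_deriv ?_
  field_simp

lemma deriv_one_div_sqrt_one_add_sq :
    deriv (fun x : ℝ => 1 / √(1 + x ^ 2)) = fun x => -x / √(1 + x ^ 2) ^ 3 := by
  funext x
  simp only [one_div]
  refine (((hasDerivAt_sqrt_one_add_sq x).inv (by positivity)).congr_deriv ?_).deriv
  field_simp

lemma deriv_deriv_one_div_sqrt_one_add_sq (x : ℝ) :
    deriv (deriv fun x : ℝ => 1 / √(1 + x ^ 2)) x = (2 * x ^ 2 - 1) / √(1 + x ^ 2) ^ 5 := by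
  have hs_sq : √(1 + x ^ 2) ^ 2 = 1 + x ^ 2 := sq_sqrt (by positivity)
  have hquot : HasDerivAt (fun x => -x / √(1 + x ^ 2) ^ 3) _ x :=
    (hasDerivAt_neg x).div ((hasDerivAt_sqrt_one_add_sq x).pow 3) (by positivity)
  rw [deriv_one_div_sqrt_one_add_sq, hquot.deriv]
  field_simp
  linear_combination -√(1 + x ^ 2) ^ 2 * hs_sq

lemma separated_quasilinear_wave_eq_zero {A A' A'' B B'' : ℝ} (hB : B ≠ 0)
    (hA : -A'' - 3 * A' ^ 2 * A'' = A) :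
    -B'' / B * (A'' * B) - A * B'' + -B'' / B ^ 3 * (3 * (A' * B) ^ 2 * (A'' * B)) = 0 := by
  field_simp
  linear_combination B'' * hA

theorem stmt17_general
    (b : ℝ → ℝ) (hb : b = fun x => 1 / Real.sqrt (1 + x ^ 2))
    (g h : ℝ → ℝ)
    (hg : g = fun x => -(deriv (deriv b) x) / b x)
    (hh : h = fun x => -(deriv (deriv b) x) / (b x) ^ 3)
    (a a' a'' : ℝ → ℝ)
    (hode : ∀ t : ℝ, -(a'' t) - 3 * (a' t) ^ 2 * (a'' t) = a t) :
    (∀ x : ℝ, h x = (1 - 2 * x ^ 2) / (1 + x ^ 2)) ∧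
    (∀ x t : ℝ,
      g x * (a'' t * b x) - a t * deriv (deriv b) x +
        h x * (3 * (a' t * b x) ^ 2 * (a'' t * b x)) = 0) := by
  subst hb hg hh
  refine ⟨fun x => ?_, fun x t => separated_quasilinear_wave_eq_zero (by positivity) (hode t)⟩
  have hs_sq : √(1 + x ^ 2) ^ 2 = 1 + x ^ 2 := sq_sqrt (by positivity)
  beta_reduce
  rw [deriv_deriv_one_div_sqrt_one_add_sq]
  field_simp
  linear_combination (2 * x ^ 2 - 1) * hs_sq

/-- An explicit separated-variables breather-type solution: with
`b(x) = (1+x²)^{-1/2}`, `g(x) = -b''(x)/b(x)`, `h(x) = -b''(x)/b(x)³`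
(explicitly `h(x) = (1-2x²)/(1+x²)`), and `a` twice differentiable solving
`-a'' - 3 a'² a'' = a`, the function `w(x,t) = a(t) b(x)` satisfies
`g(x) ∂ₜ²w - ∂ₓ²w + h(x) ∂ₜ((∂ₜw)³) = 0` pointwise, where
`∂ₜ((∂ₜw)³) = 3 (∂ₜw)² ∂ₜ²w`, `∂ₜw = a'(t) b(x)`, `∂ₜ²w = a''(t) b(x)` and
`∂ₓ²w = a(t) b''(x)`. -/
theorem stmt17
    (b : ℝ → ℝ) (hb : b = fun x => 1 / Real.sqrt (1 + x ^ 2))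
    (g h : ℝ → ℝ)
    (hg : g = fun x => -(deriv (deriv b) x) / b x)
    (hh : h = fun x => -(deriv (deriv b) x) / (b x) ^ 3)
    (a a' a'' : ℝ → ℝ)
    (ha' : ∀ t : ℝ, HasDerivAt a (a' t) t)
    (ha'' : ∀ t : ℝ, HasDerivAt a' (a'' t) t)
    (hode : ∀ t : ℝ, -(a'' t) - 3 * (a' t) ^ 2 * (a'' t) = a t) :
    (∀ x : ℝ, h x = (1 - 2 * x ^ 2) / (1 + x ^ 2)) ∧
    (∀ x t : ℝ,
      g x * (a'' t * b x) - a t * deriv (deriv b) x +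
        h x * (3 * (a' t * b x) ^ 2 * (a'' t * b x)) = 0) :=
  stmt17_general b hb g h hg hh a a' a'' hode
end

section
/- Let a, b, c, ω > 0 and let k be a positive integer with cos(kω√b c) = 0. Define φ : [0,∞) → ℝ by φ(x) := √(b/a) sin(kω√b x) + cos(kω√b x) for 0 ≤ x ≤ c and φ(x) := √(b/a) sin(kω√b c) e^{−kω√a (x−c)} for x ≥ c. Then φ is continuously differentiable on [0,∞) with φ(0) = 1 and φ'(0) = kωb/√a > 0; φ satisfies φ''(x) + k²ω² b φ(x) = 0 for x ∈ (0,c) and φ''(x) − k²ω² a φ(x) = 0 for x ∈ (c,∞); and |φ(x)| ≤ M e^{−ρ x} for all x ≥ 0 with ρ := ω√a/2 and M := (1+√(b/a)) e^{ω√a c}, both independent of k. -/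
/-!
On `[0, c]` the function is a trigonometric solution of `u'' + k²ω²b u = 0`, on `[c, ∞)` a
decaying exponential solution of `u'' - k²ω²a u = 0`. The condition `cos(kω√b c) = 0` makes
the two pieces agree at `c`, and the factor `√(b/a)` makes their slopes agree there, since
`kω√a · √(b/a) = kω√b`; so the glued function is `C¹`. The decay rate can be taken
independent of `k` because `kω√a ≥ ω√a` for `k ≥ 1`, and the factor `e^{ω√a c}` absorbs the
bounded piece on `[0, c]`.
-/

open Real Set Filter Topology

section Gluing

variable {f g f' g' : ℝ → ℝ} {c x : ℝ}

theorem ite_le_eventuallyEq_of_lt (hxc : x < c) :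
    (fun y => if y ≤ c then f y else g y) =ᶠ[𝓝 x] f := by
  filter_upwards [Iio_mem_nhds hxc] with y hy
  rw [if_pos (le_of_lt hy)]

theorem ite_le_eventuallyEq_of_gt (hcx : c < x) :
    (fun y => if y ≤ c then f y else g y) =ᶠ[𝓝 x] g := by
  filter_upwards [Ioi_mem_nhds hcx] with y hy
  rw [if_neg (not_le.mpr hy)]

theorem hasDerivAt_ite_le (hf : ∀ x, HasDerivAt f (f' x) x) (hg : ∀ x, HasDerivAt g (g' x) x)
    (hfg : f c = g c) (hfg' : f' c = g' c) (x : ℝ) :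
    HasDerivAt (fun y => if y ≤ c then f y else g y) (if x ≤ c then f' x else g' x) x := by
  rcases lt_trichotomy x c with hxc | rfl | hcx
  · simpa [hxc.le] using (hf x).congr_of_eventuallyEq (ite_le_eventuallyEq_of_lt hxc)
  · have hleft : HasDerivWithinAt (fun y => if y ≤ x then f y else g y) (f' x) (Iic x) x :=
      (hf x).hasDerivWithinAt.congr (fun y hy => if_pos hy) (if_pos le_rfl)
    have hright : HasDerivWithinAt (fun y => if y ≤ x then f y else g y) (f' x) (Ici x) x := by
      refine hfg' ▸ (hg x).hasDerivWithinAt.congr (fun y (hy : x ≤ y) => ?_) (by simp [hfg])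
      rcases hy.eq_or_lt with rfl | hxy
      · simp [hfg]
      · simp [not_le.mpr hxy]
    have hboth := hleft.union hright
    rw [Iic_union_Ici, hasDerivWithinAt_univ] at hboth
    simpa using hboth
  · simpa [not_le.mpr hcx] using (hg x).congr_of_eventuallyEq (ite_le_eventuallyEq_of_gt hcx)

theorem deriv_deriv_ite_le_of_lt (hxc : x < c) :
    deriv (deriv fun y => if y ≤ c then f y else g y) x = deriv (deriv f) x :=
  (ite_le_eventuallyEq_of_lt hxc).deriv.deriv_eq

theorem deriv_deriv_ite_le_of_gt (hcx : c < x) :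
    deriv (deriv fun y => if y ≤ c then f y else g y) x = deriv (deriv g) x :=
  (ite_le_eventuallyEq_of_gt hcx).deriv.deriv_eq

end Gluing

section Solutions

variable (A B C β μ c : ℝ)

theorem hasDerivAt_sin_add_cos (x : ℝ) :
    HasDerivAt (fun x => A * sin (β * x) + B * cos (β * x))
      (-(β * B) * sin (β * x) + β * A * cos (β * x)) x := by
  have hlin : HasDerivAt (fun x => β * x) β x := by simpa using (hasDerivAt_id x).const_mul β
  exact ((hlin.sin.const_mul A).add (hlin.cos.const_mul B)).congr_deriv (by ring)

theorem deriv_sin_add_cos :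
    deriv (fun x => A * sin (β * x) + B * cos (β * x)) =
      fun x => -(β * B) * sin (β * x) + β * A * cos (β * x) :=
  funext fun x => (hasDerivAt_sin_add_cos A B β x).deriv

theorem deriv_deriv_sin_add_cos (x : ℝ) :
    deriv (deriv fun x => A * sin (β * x) + B * cos (β * x)) x =
      -β ^ 2 * (A * sin (β * x) + B * cos (β * x)) := by
  rw [deriv_sin_add_cos, deriv_sin_add_cos]
  ring

theorem hasDerivAt_mul_exp_mul_sub (x : ℝ) :
    HasDerivAt (fun x => C * exp (μ * (x - c))) (μ * C * exp (μ * (x - c))) x := by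
  have hlin : HasDerivAt (fun x => μ * (x - c)) μ x := by
    simpa using ((hasDerivAt_id x).sub_const c).const_mul μ
  exact (hlin.exp.const_mul C).congr_deriv (by ring)

theorem deriv_mul_exp_mul_sub :
    deriv (fun x => C * exp (μ * (x - c))) = fun x => μ * C * exp (μ * (x - c)) :=
  funext fun x => (hasDerivAt_mul_exp_mul_sub C μ c x).deriv

theorem deriv_deriv_mul_exp_mul_sub (x : ℝ) :
    deriv (deriv fun x => C * exp (μ * (x - c))) x = μ ^ 2 * (C * exp (μ * (x - c))) := by
  rw [deriv_mul_exp_mul_sub, deriv_mul_exp_mul_sub]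
  ring

theorem abs_mul_sin_add_mul_cos_le (θ : ℝ) : |A * sin θ + B * cos θ| ≤ |A| + |B| :=
  calc |A * sin θ + B * cos θ| ≤ |A| * |sin θ| + |B| * |cos θ| := by
        simpa only [abs_mul] using abs_add_le (A * sin θ) (B * cos θ)
    _ ≤ |A| * 1 + |B| * 1 := by gcongr <;> [exact abs_sin_le_one θ; exact abs_cos_le_one θ]
    _ = |A| + |B| := by ring

end Solutions

theorem abs_le_mul_exp_of_bounded_of_decay {u : ℝ → ℝ} {K ρ α c : ℝ} (hK : 0 ≤ K)
    (hρ : 0 ≤ ρ) (hρα : ρ ≤ α) (hle : ∀ x ∈ Icc 0 c, |u x| ≤ K)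
    (hgt : ∀ x, c < x → |u x| ≤ K * exp (-α * (x - c))) (x : ℝ) (hx : 0 ≤ x) :
    |u x| ≤ K * exp (ρ * c) * exp (-(ρ / 2) * x) := by
  rw [mul_assoc, ← exp_add]
  rcases le_or_gt x c with hxc | hcx
  · calc |u x| ≤ K * 1 := by simpa using hle x ⟨hx, hxc⟩
      _ ≤ K * exp (ρ * c + -(ρ / 2) * x) := by
        gcongr
        exact one_le_exp (by nlinarith)
  · calc |u x| ≤ K * exp (-α * (x - c)) := hgt x hcx
      _ ≤ K * exp (ρ * c + -(ρ / 2) * x) := by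
        gcongr
        nlinarith

/-- With `r = √(b/a)`, `β = kω√b` and `α = kω√a` this is the `φ` of the theorem. -/
noncomputable def stepSolution (r β α c : ℝ) (x : ℝ) : ℝ :=
  if x ≤ c then r * sin (β * x) + cos (β * x) else r * sin (β * c) * exp (-α * (x - c))

noncomputable def stepSolutionDeriv (r β α c : ℝ) (x : ℝ) : ℝ :=
  if x ≤ c then β * (r * cos (β * x) - sin (β * x))
  else -α * (r * sin (β * c)) * exp (-α * (x - c))

section StepSolution

variable {r β α c : ℝ}

theorem stepSolution_zero (hc : 0 ≤ c) : stepSolution r β α c 0 = 1 := by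
  simp [stepSolution, hc]

theorem stepSolutionDeriv_zero (hc : 0 ≤ c) : stepSolutionDeriv r β α c 0 = β * r := by
  simp [stepSolutionDeriv, hc]

theorem hasDerivAt_stepSolution (hcos : cos (β * c) = 0) (hαr : α * r = β) (x : ℝ) :
    HasDerivAt (stepSolution r β α c) (stepSolutionDeriv r β α c x) x := by
  have htrig := hasDerivAt_sin_add_cos r 1 β
  simp only [one_mul, mul_one] at htrig
  refine hasDerivAt_ite_le (c := c) (f' := fun x => β * (r * cos (β * x) - sin (β * x)))
    (fun x => (htrig x).congr_deriv (by ring))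
    (hasDerivAt_mul_exp_mul_sub (r * sin (β * c)) (-α) c) ?_ ?_ x
  · simp [hcos]
  · simp only [hcos, sub_self, mul_zero, exp_zero]
    linear_combination sin (β * c) * hαr

theorem continuous_stepSolutionDeriv (hcos : cos (β * c) = 0) (hαr : α * r = β) :
    Continuous (stepSolutionDeriv r β α c) := by
  refine Continuous.if_le (by fun_prop) (by fun_prop) continuous_id continuous_const ?_
  rintro x rfl
  simp only [hcos, sub_self, mul_zero, exp_zero]
  linear_combination sin (β * x) * hαr

theorem deriv_deriv_stepSolution_add_of_lt {x : ℝ} (hx : x < c) :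
    deriv (deriv (stepSolution r β α c)) x + β ^ 2 * stepSolution r β α c x = 0 := by
  have htrig := deriv_deriv_sin_add_cos r 1 β x
  simp only [one_mul] at htrig
  have hlocal : deriv (deriv (stepSolution r β α c)) x =
      deriv (deriv fun y => r * sin (β * y) + cos (β * y)) x :=
    deriv_deriv_ite_le_of_lt hx
  rw [hlocal, htrig, stepSolution, if_pos hx.le]
  ring

theorem deriv_deriv_stepSolution_sub_of_gt {x : ℝ} (hx : c < x) :
    deriv (deriv (stepSolution r β α c)) x - α ^ 2 * stepSolution r β α c x = 0 := by
  have hlocal : deriv (deriv (stepSolution r β α c)) x =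
      deriv (deriv fun y => r * sin (β * c) * exp (-α * (y - c))) x :=
    deriv_deriv_ite_le_of_gt hx
  rw [hlocal, deriv_deriv_mul_exp_mul_sub, stepSolution, if_neg (not_le.mpr hx), neg_sq]
  ring

theorem abs_stepSolution_le {ρ : ℝ} (hr : 0 ≤ r) (hρ : 0 ≤ ρ) (hρα : ρ ≤ α) {x : ℝ}
    (hx : 0 ≤ x) :
    |stepSolution r β α c x| ≤ (1 + r) * exp (ρ * c) * exp (-(ρ / 2) * x) := by
  refine abs_le_mul_exp_of_bounded_of_decay (by positivity) hρ hρα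
    (fun x hx => ?_) (fun x hx => ?_) x hx
  · rw [stepSolution, if_pos hx.2]
    simpa [abs_of_nonneg hr, add_comm] using abs_mul_sin_add_mul_cos_le r 1 (β * x)
  · rw [stepSolution, if_neg (not_le.mpr hx)]
    calc |r * sin (β * c) * exp (-α * (x - c))| = r * |sin (β * c)| * exp (-α * (x - c)) := by
          rw [abs_mul, abs_mul, abs_of_nonneg hr, abs_of_pos (exp_pos _)]
      _ ≤ (1 + r) * 1 * exp (-α * (x - c)) := by
          gcongr
          · linarith
          · exact abs_sin_le_one _
      _ = (1 + r) * exp (-α * (x - c)) := by ring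

end StepSolution

/-- The exponentially decaying fundamental solution for the step potential: for
`a, b, c, ω > 0` and a positive integer `k` with `cos(kω√b c) = 0`, the function
`φ(x) = √(b/a) sin(kω√b x) + cos(kω√b x)` for `0 ≤ x ≤ c` and
`φ(x) = √(b/a) sin(kω√b c) e^{-kω√a (x-c)}` for `x ≥ c`
is continuously differentiable on `[0,∞)` with `φ(0) = 1`,
`φ'(0) = kωb/√a > 0`, solves `φ'' + k²ω²b φ = 0` on `(0,c)` and
`φ'' - k²ω²a φ = 0` on `(c,∞)`, and satisfies `|φ(x)| ≤ M e^{-ρx}` for `x ≥ 0` with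
`ρ = ω√a/2` and `M = (1 + √(b/a)) e^{ω√a c}`, both independent of `k`. -/
theorem stmt18 (a b c ω : ℝ) (ha : 0 < a) (hb : 0 < b) (hc : 0 < c) (hω : 0 < ω)
    (k : ℕ) (hk : 0 < k)
    (hcos : Real.cos ((k : ℝ) * ω * Real.sqrt b * c) = 0)
    (φ : ℝ → ℝ)
    (hφ : ∀ x : ℝ, φ x =
      if x ≤ c then
        Real.sqrt (b / a) * Real.sin ((k : ℝ) * ω * Real.sqrt b * x) +
          Real.cos ((k : ℝ) * ω * Real.sqrt b * x)
      else
        Real.sqrt (b / a) * Real.sin ((k : ℝ) * ω * Real.sqrt b * c) *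
          Real.exp (-((k : ℝ) * ω * Real.sqrt a) * (x - c))) :
    φ 0 = 1 ∧
    (∃ φ' : ℝ → ℝ,
      (∀ x ∈ Set.Ici (0 : ℝ), HasDerivWithinAt φ (φ' x) (Set.Ici 0) x) ∧
      ContinuousOn φ' (Set.Ici 0) ∧
      φ' 0 = (k : ℝ) * ω * b / Real.sqrt a ∧ 0 < φ' 0) ∧
    (∀ x ∈ Set.Ioo (0 : ℝ) c, deriv (deriv φ) x + (k : ℝ) ^ 2 * ω ^ 2 * b * φ x = 0) ∧
    (∀ x ∈ Set.Ioi c, deriv (deriv φ) x - (k : ℝ) ^ 2 * ω ^ 2 * a * φ x = 0) ∧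
    (∀ x : ℝ, 0 ≤ x →
      |φ x| ≤ ((1 + Real.sqrt (b / a)) * Real.exp (ω * Real.sqrt a * c)) *
        Real.exp (-(ω * Real.sqrt a / 2) * x)) := by
  obtain rfl : φ = stepSolution (√(b / a)) (k * ω * √b) (k * ω * √a) c := funext hφ
  have hk1 : (1 : ℝ) ≤ k := by exact_mod_cast hk
  have hαr : k * ω * √a * √(b / a) = k * ω * √b := by
    rw [sqrt_div' b ha.le, mul_assoc _ (√a), mul_div_cancel₀ _ (sqrt_pos.mpr ha).ne']
  have hslope : k * ω * √b * √(b / a) = k * ω * b / √a := by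
    rw [sqrt_div' b ha.le, mul_div_assoc', mul_assoc _ (√b), mul_self_sqrt hb.le]
  have hβ2 : (k * ω * √b) ^ 2 = k ^ 2 * ω ^ 2 * b := by rw [mul_pow, sq_sqrt hb.le, mul_pow]
  have hα2 : (k * ω * √a) ^ 2 = k ^ 2 * ω ^ 2 * a := by rw [mul_pow, sq_sqrt ha.le, mul_pow]
  have hρα : ω * √a ≤ k * ω * √a := by
    rw [mul_assoc]
    exact le_mul_of_one_le_left (by positivity) hk1
  refine ⟨stepSolution_zero hc.le,
    ⟨_, fun x _ => (hasDerivAt_stepSolution hcos hαr x).hasDerivWithinAt,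
      (continuous_stepSolutionDeriv hcos hαr).continuousOn,
      by rw [stepSolutionDeriv_zero hc.le, hslope], ?_⟩,
    fun x hx => hβ2 ▸ deriv_deriv_stepSolution_add_of_lt hx.2,
    fun x hx => hα2 ▸ deriv_deriv_stepSolution_sub_of_gt hx,
    fun x hx => abs_stepSolution_le (sqrt_nonneg _) (by positivity) hρα hx⟩
  rw [stepSolutionDeriv_zero hc.le, hslope]
  positivity
end

section
/- Let k be a positive integer, ω, a, b > 0 and Θ ∈ (0,1); set m := 2√a Θ ω and l := √(b/a)·(1−Θ)/Θ. For s ∈ ℝ and c > 0 let T_k(s,c) be the 2×2 real matrix with first row (cos(kω√c s), sin(kω√c s)/(kω√c)) and second row (−kω√c sin(kω√c s), cos(kω√c s)). Then the monodromy matrix A_k := T_k(2π(1−Θ), b) · T_k(2Θπ, a) satisfies det A_k = 1 and tr A_k = 2 cos(kmlπ) cos(kmπ) − (√(a/b) + √(b/a)) sin(kmlπ) sin(kmπ). In particular, if cos(kmπ) = cos(kmlπ) = 0 and a ≠ b, then |tr A_k| = √(a/b) + √(b/a) > 2. -/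
/-!
Each factor `T_k(s, c)` has determinant `cos² + sin² = 1`, and multiplying two such matrices
with frequencies `p`, `q` gives trace
`2 cos(qt) cos(ps) - (p/q + q/p) sin(qt) sin(ps)`. For `p = kω√a`, `q = kω√b` the phases are
`kmπ` and `kmlπ` and `p/q = √(a/b)`. When both cosines vanish both sines are `±1`, so
`|tr A_k| = p/q + q/p`, which exceeds `2` by AM–GM as soon as `p ≠ q`.
-/

open Matrix Real

/-- The flow of `φ'' = -q² φ` over length `s`; the paper's `T_k(s, c)` is `propagator (kω√c) s`. -/
noncomputable def propagator (q s : ℝ) : Matrix (Fin 2) (Fin 2) ℝ :=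
  !![cos (q * s), sin (q * s) / q; -q * sin (q * s), cos (q * s)]

theorem det_propagator {q : ℝ} (hq : q ≠ 0) (s : ℝ) : (propagator q s).det = 1 := by
  rw [propagator, det_fin_two_of]
  field_simp
  linear_combination cos_sq_add_sin_sq (q * s)

theorem trace_propagator_mul_propagator {p q : ℝ} (hp : p ≠ 0) (hq : q ≠ 0) (s t : ℝ) :
    (propagator q t * propagator p s).trace =
      2 * cos (q * t) * cos (p * s) - (p / q + q / p) * sin (q * t) * sin (p * s) := by
  rw [propagator, propagator, mul_fin_two, trace_fin_two_of]
  field_simp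
  ring

theorem abs_sin_eq_one_of_cos_eq_zero {x : ℝ} (h : cos x = 0) : |sin x| = 1 := by
  have h_sq : |sin x| ^ 2 = 1 := by
    rw [sq_abs]
    linear_combination sin_sq_add_cos_sq x - cos x * h
  exact (pow_eq_one_iff_of_nonneg (abs_nonneg _) two_ne_zero).mp h_sq

theorem two_lt_div_add_div {p q : ℝ} (hp : 0 < p) (hq : 0 < q) (hpq : p ≠ q) :
    2 < p / q + q / p := by
  rw [div_add_div _ _ hq.ne' hp.ne', lt_div_iff₀ (by positivity)]
  nlinarith [sq_pos_of_ne_zero (sub_ne_zero.mpr hpq)]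

theorem sqrt_div_eq_mul_sqrt_div_mul_sqrt {x a : ℝ} (hx : x ≠ 0) (ha : 0 ≤ a) (b : ℝ) :
    √(a / b) = x * √a / (x * √b) := by
  rw [sqrt_div ha, mul_div_mul_left _ _ hx]

/-- The monodromy matrix of the periodic step potential: with
`m = 2√a Θ ω`, `l = √(b/a)(1-Θ)/Θ` and the propagation matrices
`T_k(s,c) = [[cos(kω√c s), sin(kω√c s)/(kω√c)], [-kω√c sin(kω√c s), cos(kω√c s)]]`,
the monodromy matrix `A_k = T_k(2π(1-Θ), b) · T_k(2Θπ, a)` satisfies `det A_k = 1` and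
`tr A_k = 2cos(kmlπ)cos(kmπ) - (√(a/b)+√(b/a)) sin(kmlπ) sin(kmπ)`. In particular, if
`cos(kmπ) = cos(kmlπ) = 0` and `a ≠ b`, then `|tr A_k| = √(a/b)+√(b/a) > 2`. -/
theorem stmt19 (k : ℕ) (hk : 0 < k) (ω a b Θ : ℝ)
    (hω : 0 < ω) (ha : 0 < a) (hb : 0 < b) (hΘ : Θ ∈ Set.Ioo (0 : ℝ) 1)
    (m l : ℝ) (hm : m = 2 * Real.sqrt a * Θ * ω)
    (hl : l = Real.sqrt (b / a) * (1 - Θ) / Θ)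
    (Tk : ℝ → ℝ → Matrix (Fin 2) (Fin 2) ℝ)
    (hTk : ∀ s c : ℝ, Tk s c =
      !![Real.cos ((k : ℝ) * ω * Real.sqrt c * s),
          Real.sin ((k : ℝ) * ω * Real.sqrt c * s) / ((k : ℝ) * ω * Real.sqrt c);
         -((k : ℝ) * ω * Real.sqrt c) * Real.sin ((k : ℝ) * ω * Real.sqrt c * s),
          Real.cos ((k : ℝ) * ω * Real.sqrt c * s)])
    (A : Matrix (Fin 2) (Fin 2) ℝ)
    (hA : A = Tk (2 * Real.pi * (1 - Θ)) b * Tk (2 * Θ * Real.pi) a) :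
    A.det = 1 ∧
    A.trace = 2 * Real.cos ((k : ℝ) * m * l * Real.pi) * Real.cos ((k : ℝ) * m * Real.pi) -
      (Real.sqrt (a / b) + Real.sqrt (b / a)) *
        Real.sin ((k : ℝ) * m * l * Real.pi) * Real.sin ((k : ℝ) * m * Real.pi) ∧
    ((Real.cos ((k : ℝ) * m * Real.pi) = 0 ∧ Real.cos ((k : ℝ) * m * l * Real.pi) = 0 ∧
        a ≠ b) →
      |A.trace| = Real.sqrt (a / b) + Real.sqrt (b / a) ∧ 2 < |A.trace|) := by
  have hkω : (k : ℝ) * ω ≠ 0 := by positivity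
  set p := (k : ℝ) * ω * √a
  set q := (k : ℝ) * ω * √b
  have hp : 0 < p := by positivity
  have hq : 0 < q := by positivity
  have hA' : A = propagator q (2 * π * (1 - Θ)) * propagator p (2 * Θ * π) := by
    rw [hA, hTk, hTk]; rfl
  have h_phase_a : p * (2 * Θ * π) = k * m * π := by rw [hm]; ring
  have h_phase_b : q * (2 * π * (1 - Θ)) = k * m * l * π := by
    have h_sqrt : √a * √(b / a) = √b := by rw [← sqrt_mul ha.le, mul_div_cancel₀ _ ha.ne']
    have hq_eq : q = k * ω * (√a * √(b / a)) := by rw [h_sqrt]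
    rw [hq_eq, hm, hl]
    field_simp [hΘ.1.ne']
  have h_trace : A.trace = 2 * cos (k * m * l * π) * cos (k * m * π) -
      (√(a / b) + √(b / a)) * sin (k * m * l * π) * sin (k * m * π) := by
    rw [hA', trace_propagator_mul_propagator hp.ne' hq.ne', h_phase_a, h_phase_b,
      sqrt_div_eq_mul_sqrt_div_mul_sqrt hkω ha.le b, sqrt_div_eq_mul_sqrt_div_mul_sqrt hkω hb.le a]
  refine ⟨by rw [hA', det_mul, det_propagator hq.ne', det_propagator hp.ne', one_mul],
    h_trace, ?_⟩
  rintro ⟨hca, hcb, hab⟩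
  have h_abs : |A.trace| = √(a / b) + √(b / a) := by
    rw [h_trace, hca, hcb, mul_zero, zero_sub, abs_neg, abs_mul, abs_mul,
      abs_sin_eq_one_of_cos_eq_zero hca, abs_sin_eq_one_of_cos_eq_zero hcb,
      mul_one, mul_one, abs_of_nonneg (by positivity)]
  refine ⟨h_abs, ?_⟩
  have hpq : p ≠ q := fun h =>
    hab (by rw [← sq_sqrt ha.le, ← sq_sqrt hb.le, mul_left_cancel₀ hkω h])
  rw [h_abs, sqrt_div_eq_mul_sqrt_div_mul_sqrt hkω ha.le b, sqrt_div_eq_mul_sqrt_div_mul_sqrt hkω hb.le a]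
  exact two_lt_div_add_div hp hq hpq
end
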